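/- Let G be a vertex-weighted graph with positive weights, let v be a vertex of G, and let G' be obtained from G by the extended reduced weighted struction at v. If I' is an independent set of G' containing a vertex v_c ∈ V_C (with c ∈ C'), then v_c is the unique vertex of V_C in I', every vertex of V_E in I' has first index c, and the set (I' ∩ (V \ N[v])) ∪ c ∪ {y : v_{c,y} ∈ I'} is an independent set of G whose weight in G equals the weight of I' in G' plus w(v). If instead I' contains no vertex of V_C and no vertex of V_E, then I' ∪ {v} is an independent set of G whose weight in G equals the weight of I' in G' plus w(v). -/
import Mathlib


/-!
Extended reduced weighted struction: applied at an arbitrary vertex `v`.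
It removes `v` together with its whole neighborhood `N(v)`.  For every
independent set `c` of `G[N(v)]` with `w(c) > w(v)` all of whose proper
subsets have weight at most `w(v)` (the family `C'`), it adds a new vertex
`v_c` of weight `w(c) - w(v)` (the set `V_C`), and for every such `c` and
every `y ∈ N(v)` with `y ∉ c` that is adjacent to no vertex of `c` it adds
a new vertex `v_{c,y}` of weight `w(y)` (the set `V_E`), with the edges
described below.
-/

open scoped Classical

variable {V : Type*}

/-- `I` is an independent set of `G`. -/
def IsIndep (G : SimpleGraph V) (I : Finset V) : Prop :=
  ∀ x ∈ I, ∀ y ∈ I, ¬ G.Adj x y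

/-- The weighted independence number of `G` with weights `w`: the supremum
(for a finite graph, the maximum) of the weights of independent sets. -/
noncomputable def alphaW (G : SimpleGraph V) (w : V → ℝ) : ℝ :=
  sSup {r : ℝ | ∃ I : Finset V, IsIndep G I ∧ r = ∑ x ∈ I, w x}

/-- Membership in the family `C'`: `c` is an independent set of `G[N(v)]`
with `w(c) > w(v)` all of whose proper subsets have weight at most `w(v)`. -/
def CPred (G : SimpleGraph V) (w : V → ℝ) (v : V) (c : Finset V) : Prop :=
  (∀ x ∈ c, G.Adj v x) ∧ IsIndep G c ∧ w v < ∑ x ∈ c, w x ∧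
    ∀ d : Finset V, d ⊂ c → ∑ x ∈ d, w x ≤ w v

/-- Old vertices: the vertices outside the closed neighborhood `N[v]`. -/
abbrev ROld (G : SimpleGraph V) (v : V) : Type _ :=
  {u : V // u ≠ v ∧ ¬ G.Adj v u}

/-- The new vertices `V_C`, one for each `c ∈ C'`. -/
abbrev RVC (G : SimpleGraph V) (w : V → ℝ) (v : V) : Type _ :=
  {c : Finset V // CPred G w v c}

/-- The new vertices `V_E`, one for each pair of `c ∈ C'` and `y ∈ N(v)`
with `y ∉ c` adjacent to no vertex of `c`. -/
abbrev RVE (G : SimpleGraph V) (w : V → ℝ) (v : V) : Type _ :=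
  {p : Finset V × V //
    CPred G w v p.1 ∧ G.Adj v p.2 ∧ p.2 ∉ p.1 ∧ ∀ x ∈ p.1, ¬ G.Adj p.2 x}

/-- Adjacency for the extended reduced weighted struction at `v`. -/
def redRel (G : SimpleGraph V) (w : V → ℝ) (v : V) :
    ROld G v ⊕ RVC G w v ⊕ RVE G w v →
      ROld G v ⊕ RVC G w v ⊕ RVE G w v → Prop
  | Sum.inl u, Sum.inl u' => G.Adj u.val u'.val
  | Sum.inl u, Sum.inr (Sum.inl c) => ∃ x ∈ c.val, G.Adj u.val x
  | Sum.inl u, Sum.inr (Sum.inr p) =>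
      G.Adj u.val p.val.2 ∨ ∃ x ∈ p.val.1, G.Adj u.val x
  | Sum.inr (Sum.inl c), Sum.inl u => ∃ x ∈ c.val, G.Adj u.val x
  | Sum.inr (Sum.inl _), Sum.inr (Sum.inl _) => True
  | Sum.inr (Sum.inl c), Sum.inr (Sum.inr p) => c.val ≠ p.val.1
  | Sum.inr (Sum.inr p), Sum.inl u =>
      G.Adj u.val p.val.2 ∨ ∃ x ∈ p.val.1, G.Adj u.val x
  | Sum.inr (Sum.inr p), Sum.inr (Sum.inl c) => c.val ≠ p.val.1
  | Sum.inr (Sum.inr p), Sum.inr (Sum.inr q) =>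
      p.val.1 ≠ q.val.1 ∨ G.Adj p.val.2 q.val.2

/-- The graph obtained from `G` by the extended reduced weighted struction. -/
def redStruction (G : SimpleGraph V) (w : V → ℝ) (v : V) :
    SimpleGraph (ROld G v ⊕ RVC G w v ⊕ RVE G w v) :=
  SimpleGraph.fromRel (redRel G w v)

/-- Weights after the extended reduced struction: old vertices keep their
weight, `v_c ∈ V_C` has weight `w(c) - w(v)`, and `v_{c,y} ∈ V_E` has
weight `w y`. -/
noncomputable def redWeight (G : SimpleGraph V) (w : V → ℝ) (v : V) :
    ROld G v ⊕ RVC G w v ⊕ RVE G w v → ℝ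
  | Sum.inl u => w u.val
  | Sum.inr (Sum.inl c) => (∑ x ∈ c.val, w x) - w v
  | Sum.inr (Sum.inr p) => w p.val.2

/-- The old vertices of a set `I'` of struction vertices, seen back in `V`. -/
noncomputable def redOldBack (G : SimpleGraph V) (w : V → ℝ) (v : V) [Fintype V]
    (I' : Finset (ROld G v ⊕ RVC G w v ⊕ RVE G w v)) : Finset V :=
  Finset.univ.filter fun y =>
    ∃ h : y ≠ v ∧ ¬ G.Adj v y, Sum.inl (⟨y, h⟩ : ROld G v) ∈ I'

/-- The second indices `y` of the `V_E`-vertices `v_{c,y}` of `I'` with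
first index `c`. -/
noncomputable def redExtBack (G : SimpleGraph V) (w : V → ℝ) (v : V) [Fintype V]
    (I' : Finset (ROld G v ⊕ RVC G w v ⊕ RVE G w v)) (c : RVC G w v) : Finset V :=
  Finset.univ.filter fun y =>
    ∃ h : CPred G w v c.val ∧ G.Adj v y ∧ y ∉ c.val ∧ ∀ x ∈ c.val, ¬ G.Adj y x,
      Sum.inr (Sum.inr (⟨(c.val, y), h⟩ : RVE G w v)) ∈ I'


/-- Projection of struction vertices back to `V`. -/
def toV (G : SimpleGraph V) (w : V → ℝ) (v : V) :
    ROld G v ⊕ RVC G w v ⊕ RVE G w v → V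
  | Sum.inl u => u.val
  | Sum.inr (Sum.inl _) => v
  | Sum.inr (Sum.inr p) => p.val.2

section Aux

variable [Fintype V] {G : SimpleGraph V} {w : V → ℝ} {v : V}
  {I' : Finset (ROld G v ⊕ RVC G w v ⊕ RVE G w v)}

lemma redStruction_not_rel (hI' : IsIndep (redStruction G w v) I')
    {x y : ROld G v ⊕ RVC G w v ⊕ RVE G w v}
    (hx : x ∈ I') (hy : y ∈ I') (hxy : x ≠ y) : ¬ redRel G w v x y := by
  intro h
  exact hI' x hx y hy ((SimpleGraph.fromRel_adj _ x y).2 ⟨hxy, Or.inl h⟩)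

lemma mem_redOldBack {y : V} :
    y ∈ redOldBack G w v I' ↔
      ∃ h : y ≠ v ∧ ¬ G.Adj v y, Sum.inl (⟨y, h⟩ : ROld G v) ∈ I' := by
  simp [redOldBack]

lemma mem_redExtBack {c : RVC G w v} {y : V} :
    y ∈ redExtBack G w v I' c ↔
      ∃ h : CPred G w v c.val ∧ G.Adj v y ∧ y ∉ c.val ∧ ∀ x ∈ c.val, ¬ G.Adj y x,
        Sum.inr (Sum.inr (⟨(c.val, y), h⟩ : RVE G w v)) ∈ I' := by
  simp [redExtBack]

lemma image_old :
    (I'.filter fun a => ∃ u, a = Sum.inl u).image (toV G w v)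
      = redOldBack G w v I' := by
  ext y
  simp only [Finset.mem_image, Finset.mem_filter, mem_redOldBack]
  constructor
  · rintro ⟨a, ⟨ha, u, rfl⟩, rfl⟩
    exact ⟨u.2, ha⟩
  · rintro ⟨h, hmem⟩
    exact ⟨Sum.inl ⟨y, h⟩, ⟨hmem, ⟨y, h⟩, rfl⟩, rfl⟩

lemma sum_old :
    ∑ y ∈ redOldBack G w v I', w y
      = ∑ a ∈ I'.filter (fun a => ∃ u, a = Sum.inl u), redWeight G w v a := by
  rw [← image_old, Finset.sum_image]
  · refine Finset.sum_congr rfl fun a ha => ?_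
    obtain ⟨-, u, rfl⟩ := Finset.mem_filter.1 ha
    rfl
  · intro a ha b hb hab
    obtain ⟨-, u, rfl⟩ := Finset.mem_filter.1 ha
    obtain ⟨-, u', rfl⟩ := Finset.mem_filter.1 hb
    exact congrArg Sum.inl (Subtype.ext hab)

lemma image_ext {c : RVC G w v}
    (hall : ∀ p : RVE G w v, Sum.inr (Sum.inr p) ∈ I' → p.val.1 = c.val) :
    (I'.filter fun a => ∃ p, a = Sum.inr (Sum.inr p)).image (toV G w v)
      = redExtBack G w v I' c := by
  ext y
  simp only [Finset.mem_image, Finset.mem_filter, mem_redExtBack]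
  constructor
  · rintro ⟨a, ⟨ha, p, rfl⟩, rfl⟩
    have hp1 : p.val.1 = c.val := hall p ha
    have hh : CPred G w v c.val ∧ G.Adj v p.val.2 ∧ p.val.2 ∉ c.val ∧
        ∀ x ∈ c.val, ¬ G.Adj p.val.2 x := hp1 ▸ p.2
    refine ⟨hh, ?_⟩
    show Sum.inr (Sum.inr (⟨(c.val, (p.val).2), hh⟩ : RVE G w v)) ∈ I'
    have hpe : (⟨(c.val, p.val.2), hh⟩ : RVE G w v) = p := by
      apply Subtype.ext
      exact Prod.ext hp1.symm rfl
    rw [hpe]; exact ha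
  · rintro ⟨h, hmem⟩
    exact ⟨Sum.inr (Sum.inr ⟨(c.val, y), h⟩), ⟨hmem, ⟨(c.val, y), h⟩, rfl⟩, rfl⟩

lemma sum_ext {c : RVC G w v}
    (hall : ∀ p : RVE G w v, Sum.inr (Sum.inr p) ∈ I' → p.val.1 = c.val) :
    ∑ y ∈ redExtBack G w v I' c, w y
      = ∑ a ∈ I'.filter (fun a => ∃ p, a = Sum.inr (Sum.inr p)),
          redWeight G w v a := by
  rw [← image_ext hall, Finset.sum_image]
  · refine Finset.sum_congr rfl fun a ha => ?_
    obtain ⟨-, p, rfl⟩ := Finset.mem_filter.1 ha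
    rfl
  · intro a ha b hb hab
    obtain ⟨ha', p, rfl⟩ := Finset.mem_filter.1 ha
    obtain ⟨hb', q, rfl⟩ := Finset.mem_filter.1 hb
    have h1 : p.val.1 = q.val.1 := (hall p ha').trans (hall q hb').symm
    exact congrArg (fun t => Sum.inr (Sum.inr t))
      (Subtype.ext (Prod.ext h1 hab))

lemma sum_split :
    ∑ a ∈ I', redWeight G w v a
      = ∑ a ∈ I'.filter (fun a => ∃ u, a = Sum.inl u), redWeight G w v a
        + ∑ a ∈ I'.filter (fun a => ∃ d, a = Sum.inr (Sum.inl d)),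
            redWeight G w v a
        + ∑ a ∈ I'.filter (fun a => ∃ p, a = Sum.inr (Sum.inr p)),
            redWeight G w v a := by
  rw [Finset.sum_filter, Finset.sum_filter, Finset.sum_filter,
    ← Finset.sum_add_distrib, ← Finset.sum_add_distrib]
  refine Finset.sum_congr rfl fun a _ => ?_
  rcases a with u | d | p <;> simp

end Aux

/-- let `I'` be an independent set of the extended reduced
struction graph `G'`.  If `I'` contains some `v_c ∈ V_C`, then `v_c` is the
unique `V_C`-vertex of `I'`, every `V_E`-vertex of `I'` has first index `c`,
and `(I' ∩ (V \ N[v])) ∪ c ∪ {y : v_{c,y} ∈ I'}` is an independent set of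
`G` whose weight in `G` equals the weight of `I'` in `G'` plus `w v`.
If instead `I'` contains no vertex of `V_C` and none of `V_E`, then
`I' ∪ {v}` is an independent set of `G` whose weight in `G` equals the
weight of `I'` in `G'` plus `w v`. -/
theorem extended_reduced_struction_reconstruct [Fintype V]
    (G : SimpleGraph V) (w : V → ℝ) (hw : ∀ u, 0 < w u) (v : V)
    (I' : Finset (ROld G v ⊕ RVC G w v ⊕ RVE G w v))
    (hI' : IsIndep (redStruction G w v) I') :
    (∀ c : RVC G w v, Sum.inr (Sum.inl c) ∈ I' →
        (∀ d : RVC G w v, Sum.inr (Sum.inl d) ∈ I' → d = c) ∧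
        (∀ p : RVE G w v, Sum.inr (Sum.inr p) ∈ I' → p.val.1 = c.val) ∧
        IsIndep G (redOldBack G w v I' ∪ c.val ∪ redExtBack G w v I' c) ∧
        ∑ x ∈ redOldBack G w v I' ∪ c.val ∪ redExtBack G w v I' c, w x =
          (∑ a ∈ I', redWeight G w v a) + w v) ∧
      ((∀ c : RVC G w v, Sum.inr (Sum.inl c) ∉ I') →
        (∀ p : RVE G w v, Sum.inr (Sum.inr p) ∉ I') →
        IsIndep G (insert v (redOldBack G w v I')) ∧
        ∑ x ∈ insert v (redOldBack G w v I'), w x =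
          (∑ a ∈ I', redWeight G w v a) + w v) := by
  constructor
  · intro c hc
    -- uniqueness of the V_C vertex
    have huniq : ∀ d : RVC G w v, Sum.inr (Sum.inl d) ∈ I' → d = c := by
      intro d hd
      by_contra hne
      have hxy : (Sum.inr (Sum.inl d) : ROld G v ⊕ RVC G w v ⊕ RVE G w v)
          ≠ Sum.inr (Sum.inl c) := by simp [hne]
      exact redStruction_not_rel hI' hd hc hxy trivial
    have hall : ∀ p : RVE G w v, Sum.inr (Sum.inr p) ∈ I' → p.val.1 = c.val := by
      intro p hp
      by_contra hne
      have hxy : (Sum.inr (Sum.inl c) : ROld G v ⊕ RVC G w v ⊕ RVE G w v)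
          ≠ Sum.inr (Sum.inr p) := by simp
      exact redStruction_not_rel hI' hc hp hxy (Ne.symm hne)
    refine ⟨huniq, hall, ?_, ?_⟩
    · -- independence
      intro x hx y hy hadj
      have hxy : x ≠ y := fun h => G.irrefl (h ▸ hadj)
      rcases Finset.mem_union.1 hx with hx | hxE
      · rcases Finset.mem_union.1 hx with hxO | hxC
        · obtain ⟨hx1, hx2⟩ := mem_redOldBack.1 hxO
          rcases Finset.mem_union.1 hy with hy | hyE
          · rcases Finset.mem_union.1 hy with hyO | hyC
            · obtain ⟨hy1, hy2⟩ := mem_redOldBack.1 hyO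
              have hne : (Sum.inl ⟨x, hx1⟩ : ROld G v ⊕ RVC G w v ⊕ RVE G w v)
                  ≠ Sum.inl ⟨y, hy1⟩ := by simp [hxy]
              exact redStruction_not_rel hI' hx2 hy2 hne hadj
            · have hne : (Sum.inl ⟨x, hx1⟩ : ROld G v ⊕ RVC G w v ⊕ RVE G w v)
                  ≠ Sum.inr (Sum.inl c) := by simp
              exact redStruction_not_rel hI' hx2 hc hne ⟨y, hyC, hadj⟩
          · obtain ⟨hy1, hy2⟩ := mem_redExtBack.1 hyE
            have hne : (Sum.inl ⟨x, hx1⟩ : ROld G v ⊕ RVC G w v ⊕ RVE G w v)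
                ≠ Sum.inr (Sum.inr ⟨(c.val, y), hy1⟩) := by simp
            exact redStruction_not_rel hI' hx2 hy2 hne (Or.inl hadj)
        · rcases Finset.mem_union.1 hy with hy | hyE
          · rcases Finset.mem_union.1 hy with hyO | hyC
            · obtain ⟨hy1, hy2⟩ := mem_redOldBack.1 hyO
              have hne : (Sum.inl ⟨y, hy1⟩ : ROld G v ⊕ RVC G w v ⊕ RVE G w v)
                  ≠ Sum.inr (Sum.inl c) := by simp
              exact redStruction_not_rel hI' hy2 hc hne ⟨x, hxC, hadj.symm⟩
            · exact c.2.2.1 x hxC y hyC hadj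
          · obtain ⟨hy1, hy2⟩ := mem_redExtBack.1 hyE
            exact hy1.2.2.2 x hxC hadj.symm
      · obtain ⟨hx1, hx2⟩ := mem_redExtBack.1 hxE
        rcases Finset.mem_union.1 hy with hy | hyE
        · rcases Finset.mem_union.1 hy with hyO | hyC
          · obtain ⟨hy1, hy2⟩ := mem_redOldBack.1 hyO
            have hne : (Sum.inl ⟨y, hy1⟩ : ROld G v ⊕ RVC G w v ⊕ RVE G w v)
                ≠ Sum.inr (Sum.inr ⟨(c.val, x), hx1⟩) := by simp
            exact redStruction_not_rel hI' hy2 hx2 hne (Or.inl hadj.symm)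
          · exact hx1.2.2.2 y hyC hadj
        · obtain ⟨hy1, hy2⟩ := mem_redExtBack.1 hyE
          have hne : (Sum.inr (Sum.inr ⟨(c.val, x), hx1⟩) :
              ROld G v ⊕ RVC G w v ⊕ RVE G w v)
              ≠ Sum.inr (Sum.inr ⟨(c.val, y), hy1⟩) := by
            simp [hxy]
          exact redStruction_not_rel hI' hx2 hy2 hne (Or.inr hadj)
    · -- weights
      have hdisj1 : Disjoint (redOldBack G w v I') c.val := by
        rw [Finset.disjoint_left]
        intro y hyO hyC
        exact (mem_redOldBack.1 hyO).choose.2 (c.2.1 y hyC)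
      have hdisj2 : Disjoint (redOldBack G w v I' ∪ c.val)
          (redExtBack G w v I' c) := by
        rw [Finset.disjoint_left]
        intro y hy hyE
        obtain ⟨hy1, -⟩ := mem_redExtBack.1 hyE
        rcases Finset.mem_union.1 hy with hyO | hyC
        · exact (mem_redOldBack.1 hyO).choose.2 hy1.2.1
        · exact hy1.2.2.1 hyC
      have hCset : I'.filter (fun a => ∃ d, a = Sum.inr (Sum.inl d))
          = {Sum.inr (Sum.inl c)} := by
        ext a
        simp only [Finset.mem_filter, Finset.mem_singleton]
        constructor
        · rintro ⟨ha, d, rfl⟩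
          rw [huniq d ha]
        · rintro rfl
          exact ⟨hc, c, rfl⟩
      rw [Finset.sum_union hdisj2, Finset.sum_union hdisj1, sum_split,
        sum_old, sum_ext hall, hCset, Finset.sum_singleton]
      show _ = _ + (∑ x ∈ c.val, w x - w v) + _ + w v
      ring
  · intro hC hE
    have hallL : ∀ a ∈ I', ∃ u, a = Sum.inl u := by
      intro a ha
      rcases a with u | d | p
      · exact ⟨u, rfl⟩
      · exact absurd ha (hC d)
      · exact absurd ha (hE p)
    constructor
    · intro x hx y hy hadj
      have hxy : x ≠ y := fun h => G.irrefl (h ▸ hadj)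
      rcases Finset.mem_insert.1 hx with rfl | hxO
      · rcases Finset.mem_insert.1 hy with rfl | hyO
        · exact hxy rfl
        · exact (mem_redOldBack.1 hyO).choose.2 hadj
      · obtain ⟨hx1, hx2⟩ := mem_redOldBack.1 hxO
        rcases Finset.mem_insert.1 hy with rfl | hyO
        · exact hx1.2 hadj.symm
        · obtain ⟨hy1, hy2⟩ := mem_redOldBack.1 hyO
          have hne : (Sum.inl ⟨x, hx1⟩ : ROld G v ⊕ RVC G w v ⊕ RVE G w v)
              ≠ Sum.inl ⟨y, hy1⟩ := by simp [hxy]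
          exact redStruction_not_rel hI' hx2 hy2 hne hadj
    · have hvnot : v ∉ redOldBack G w v I' := by
        intro hv
        exact (mem_redOldBack.1 hv).choose.1 rfl
      have hfil : I'.filter (fun a => ∃ u, a = Sum.inl u) = I' :=
        Finset.filter_true_of_mem hallL
      rw [Finset.sum_insert hvnot, sum_old, hfil]
      ring
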